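/- Let C be the m×m companion matrix of a monic degree-m polynomial g with roots x_1,...,x_m. Then for t ≥ m, the first-column entries satisfy |C^t(k+1, 1)| ≤ s_{(t+1-m, 1,...,1 with m-1-k ones)}(β,...,β) = (number of SSYT of shape (t+1-m,1,...,1) on alphabet {1,...,m}) · β^{t-k} whenever |x_j| ≤ β for all j. -/

import Mathlib

/-- Semistandard Young tableaux of hook shape `(k, 1^ℓ)` on the alphabet `{1,...,m}`. -/
abbrev HookSSYT (m k ℓ : ℕ) : Type :=
  {p : (Fin k → Fin m) × (Fin ℓ → Fin m) //
    Monotone p.1 ∧ StrictMono p.2 ∧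
    ∀ (h0 : 0 < k) (h1 : 0 < ℓ), p.1 ⟨0, h0⟩ < p.2 ⟨0, h1⟩}

/-- The Schur polynomial of the hook shape `(k, 1^ℓ)` in `m` variables. -/
noncomputable def hookSchur (R : Type*) [CommRing R] (m k ℓ : ℕ) (x : Fin m → R) : R :=
  ∑ᶠ T : HookSSYT m k ℓ, (∏ i, x (T.1.1 i)) * ∏ j, x (T.1.2 j)

/-- The elementary symmetric polynomial `e_ℓ` in `x_1, ..., x_m`. -/
noncomputable def esymmF (R : Type*) [CommRing R] (m : ℕ) (x : Fin m → R) (ℓ : ℕ) : R :=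
  ∑ S ∈ Finset.univ.powersetCard ℓ, ∏ i ∈ S, x i


/-!
The first column `v t` of `C ^ t` satisfies `v (t + 1) = C v t`, i.e.
`v (t + 1) k = v t (k - 1) + c k * v t (m - 1)` with `c` the last column of `C`, and `v m = c`.
Since `c k = ± e_{m-k}`, the Pieri rule `h_a e_{b+1} = s_{(a,1^{b+1})} + s_{(a+1,1^b)}` turns this
recursion into `v t k = (-1)^(m-1-k) s_{(t+1-m,1^{m-1-k})}(x)`. A Schur polynomial is a sum of
monomials over tableaux, so the triangle inequality bounds `|s_λ(x)|` by
`s_λ(β, ..., β) = #SSYT(λ) β^|λ|`.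
-/

open Finset

lemma Fin.monotone_cons_of_le {α : Type*} [Preorder α] {a : ℕ} {y : α} {w : Fin a → α}
    (hw : Monotone w) (h : ∀ ha : 0 < a, y ≤ w ⟨0, ha⟩) :
    Monotone (Fin.cons y w : Fin (a + 1) → α) := by
  rcases a with _ | a
  · exact Subsingleton.monotone (α := Fin 1) _
  · exact hw.vecCons (h a.succ_pos)

lemma Fin.strictMono_cons_of_lt {α : Type*} [Preorder α] {b : ℕ} {y : α} {c : Fin b → α}
    (hc : StrictMono c) (h : ∀ hb : 0 < b, y < c ⟨0, hb⟩) :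
    StrictMono (Fin.cons y c : Fin (b + 1) → α) := by
  rcases b with _ | b
  · exact Subsingleton.strictMono (α := Fin 1) _
  · exact hc.vecCons (h b.succ_pos)

namespace HookSSYT

variable {m : ℕ}

def equivRow (a : ℕ) : HookSSYT m a 0 ≃ {w : Fin a → Fin m // Monotone w} where
  toFun T := ⟨T.1.1, T.2.1⟩
  invFun w := ⟨(w.1, Fin.elim0), w.2, fun i => i.elim0, fun _ h => absurd h (lt_irrefl 0)⟩
  left_inv T := Subtype.ext (Prod.ext rfl (funext fun i => i.elim0))

def equivColumn (b : ℕ) : HookSSYT m 1 b ≃ {c : Fin (b + 1) → Fin m // StrictMono c} where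
  toFun T := ⟨Fin.cons (T.1.1 0) T.1.2, Fin.strictMono_cons_of_lt T.2.2.1 (T.2.2.2 one_pos)⟩
  invFun c := ⟨(fun _ => c.1 0, Fin.tail c.1), monotone_const,
    c.2.comp (Fin.strictMono_succ), fun _ _ => c.2 (Fin.succ_pos _)⟩
  left_inv T := Subtype.ext (Prod.ext (funext fun i => by rw [Subsingleton.elim i 0]; rfl)
    rfl)
  right_inv c := Subtype.ext (Fin.cons_self_tail _)

def equivPairLt (a b : ℕ) :
    {p : {w : Fin (a + 1) → Fin m // Monotone w} × {c : Fin (b + 1) → Fin m // StrictMono c} //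
      p.1.1 0 < p.2.1 0} ≃ HookSSYT m (a + 1) (b + 1) where
  toFun p := ⟨(p.1.1.1, p.1.2.1), p.1.1.2, p.1.2.2, fun _ _ => p.2⟩
  invFun T := ⟨(⟨T.1.1, T.2.1⟩, ⟨T.1.2, T.2.2.1⟩), T.2.2.2 a.succ_pos b.succ_pos⟩

def equivPairNotLt (a b : ℕ) :
    {p : {w : Fin (a + 1) → Fin m // Monotone w} × {c : Fin (b + 1) → Fin m // StrictMono c} //
      ¬ p.1.1 0 < p.2.1 0} ≃ HookSSYT m (a + 2) b where
  toFun p := ⟨(Fin.cons (p.1.2.1 0) p.1.1.1, Fin.tail p.1.2.1),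
    Fin.monotone_cons_of_le p.1.1.2 fun _ => le_of_not_gt p.2,
    p.1.2.2.comp Fin.strictMono_succ, fun _ _ => p.1.2.2 (Fin.succ_pos _)⟩
  invFun T := ⟨(⟨Fin.tail T.1.1, T.2.1.comp Fin.strictMono_succ.monotone⟩,
      ⟨Fin.cons (T.1.1 0) T.1.2, Fin.strictMono_cons_of_lt T.2.2.1 fun hb =>
        (T.2.2.2 (Nat.succ_pos _) hb).trans_le' (T.2.1 le_rfl)⟩),
    not_lt.2 (T.2.1 (Fin.zero_le _))⟩
  left_inv _ := Subtype.ext (Prod.ext (Subtype.ext rfl)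
    (Subtype.ext (Fin.cons_self_tail _)))
  right_inv _ := Subtype.ext (Prod.ext (Fin.cons_self_tail _) rfl)

lemma isEmpty_of_le {k ℓ : ℕ} (hk : 0 < k) (hℓ : m ≤ ℓ) : IsEmpty (HookSSYT m k ℓ) := by
  refine ⟨fun T => ?_⟩
  have := Fintype.card_le_of_injective _
    (Fin.strictMono_cons_of_lt T.2.2.1 (T.2.2.2 hk)).injective
  simp only [Fintype.card_fin] at this
  omega

end HookSSYT

noncomputable def hsymmF (R : Type*) [CommRing R] (m : ℕ) (x : Fin m → R) (a : ℕ) : R :=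
  ∑ w : {w : Fin a → Fin m // Monotone w}, ∏ i, x (w.1 i)

section Symmetric

variable {R : Type*} [CommRing R] {m : ℕ} (x : Fin m → R)

lemma esymmF_eq_sum_strictMono (b : ℕ) :
    esymmF R m x b = ∑ c : {c : Fin b → Fin m // StrictMono c}, ∏ j, x (c.1 j) := by
  refine Finset.sum_bij' (fun S hS => ⟨S.orderEmbOfFin (mem_powersetCard.1 hS).2,
      (S.orderEmbOfFin _).strictMono⟩) (fun c _ => univ.map ⟨c.1, c.2.injective⟩)
    (fun _ _ => mem_univ _) (fun c _ => mem_powersetCard.2 ⟨subset_univ _, by simp⟩) ?_ ?_ ?_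
  · intro S hS
    exact map_orderEmbOfFin_univ S (mem_powersetCard.1 hS).2
  · intro c _
    exact Subtype.ext (orderEmbOfFin_unique _ (fun _ => mem_map_of_mem _ (mem_univ _)) c.2).symm
  · intro S hS
    conv_lhs => rw [← map_orderEmbOfFin_univ S (mem_powersetCard.1 hS).2]
    rw [prod_map]
    rfl

lemma hookSchur_eq_sum (k ℓ : ℕ) : hookSchur R m k ℓ x =
    ∑ T : HookSSYT m k ℓ, (∏ i, x (T.1.1 i)) * ∏ j, x (T.1.2 j) :=
  finsum_eq_sum_of_fintype _

lemma hookSchur_zero_right (a : ℕ) : hookSchur R m a 0 x = hsymmF R m x a := by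
  rw [hookSchur_eq_sum, hsymmF]
  exact Fintype.sum_equiv (HookSSYT.equivRow a) _ _ fun _ => by simp [HookSSYT.equivRow]

lemma hookSchur_one_left (b : ℕ) : hookSchur R m 1 b x = esymmF R m x (b + 1) := by
  rw [hookSchur_eq_sum, esymmF_eq_sum_strictMono]
  exact Fintype.sum_equiv (HookSSYT.equivColumn b) _ _ fun _ => by
    simp [HookSSYT.equivColumn, Fin.prod_univ_succ]

lemma hookSchur_eq_zero_of_le {k ℓ : ℕ} (hk : 0 < k) (hℓ : m ≤ ℓ) :
    hookSchur R m k ℓ x = 0 := by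
  have := HookSSYT.isEmpty_of_le (m := m) hk hℓ
  simp [hookSchur_eq_sum]

/-- A row `w` and a column `c` form a hook tableau if `w 0 < c 0`; otherwise moving `c 0` to the
front of `w` does. -/
lemma hsymmF_mul_esymmF (a b : ℕ) :
    hsymmF R m x (a + 1) * esymmF R m x (b + 1) =
      hookSchur R m (a + 1) (b + 1) x + hookSchur R m (a + 2) b x := by
  rw [hsymmF, esymmF_eq_sum_strictMono, sum_mul_sum, ← Fintype.sum_prod_type',
    ← Fintype.sum_subtype_add_sum_subtype (fun p : {w : Fin (a + 1) → Fin m // Monotone w} ×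
      {c : Fin (b + 1) → Fin m // StrictMono c} => p.1.1 0 < p.2.1 0), hookSchur_eq_sum,
    hookSchur_eq_sum]
  congr 1
  · exact Fintype.sum_equiv (HookSSYT.equivPairLt a b) _ _ fun _ => rfl
  · refine Fintype.sum_equiv (HookSSYT.equivPairNotLt a b) _ _ fun p => ?_
    simp only [HookSSYT.equivPairNotLt, Equiv.coe_fn_mk, Fin.prod_univ_succ (n := a + 1),
      Fin.prod_univ_succ (n := b), Fin.cons_zero, Fin.cons_succ, Fin.tail]
    ring

lemma hookSchur_const (k ℓ : ℕ) (r : R) :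
    hookSchur R m k ℓ (fun _ => r) = Nat.card (HookSSYT m k ℓ) * r ^ (k + ℓ) := by
  simp [hookSchur_eq_sum, pow_add, Nat.card_eq_fintype_card]

end Symmetric

lemma norm_hookSchur_le {R : Type*} [NormedCommRing R] [NormOneClass R] {m : ℕ}
    {x : Fin m → R} {β : ℝ} (hx : ∀ j, ‖x j‖ ≤ β) (k ℓ : ℕ) :
    ‖hookSchur R m k ℓ x‖ ≤ hookSchur ℝ m k ℓ (fun _ => β) := by
  rw [hookSchur_eq_sum, hookSchur_eq_sum]
  refine (norm_sum_le _ _).trans (sum_le_sum fun T _ => (norm_mul_le _ _).trans ?_)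
  have hβ : ∀ {n} (f : Fin n → Fin m), ∏ i, ‖x (f i)‖ ≤ ∏ _i : Fin n, β := fun f =>
    prod_le_prod (fun _ _ => norm_nonneg _) fun _ _ => hx _
  exact mul_le_mul ((Finset.norm_prod_le _ _).trans (hβ _))
    ((Finset.norm_prod_le _ _).trans (hβ _))
    (norm_nonneg _) (prod_nonneg fun i _ => (norm_nonneg _).trans (hx (T.1.1 i)))

namespace Matrix

/-- The companion matrix of `X ^ m - ∑ i, c i * X ^ i`. -/
def IsCompanion {R : Type*} [Zero R] [One R] {m : ℕ} (C : Matrix (Fin m) (Fin m) R)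
    (c : Fin m → R) : Prop :=
  ∀ i j : Fin m, C i j = if (i : ℕ) = j + 1 then 1 else if (j : ℕ) = m - 1 then c i else 0

namespace IsCompanion

section Semiring

variable {R n : Type*} [Semiring R] {m : ℕ} {C : Matrix (Fin m) (Fin m) R} {c : Fin m → R}

lemma mul_apply_zero (hC : C.IsCompanion c) (hm : 0 < m) (A : Matrix (Fin m) n R) (j : n) :
    (C * A) ⟨0, hm⟩ j = c ⟨0, hm⟩ * A ⟨m - 1, by omega⟩ j := by
  rw [mul_apply, Fintype.sum_eq_single ⟨m - 1, by omega⟩ fun l hl => ?_, hC]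
  · simp
  · rw [hC, if_neg l.val.succ_ne_zero.symm, if_neg fun h => hl (Fin.ext h), zero_mul]

lemma mul_apply_succ (hC : C.IsCompanion c) {k : ℕ} (hk : k + 1 < m)
    (A : Matrix (Fin m) n R) (j : n) :
    (C * A) ⟨k + 1, hk⟩ j =
      A ⟨k, by omega⟩ j + c ⟨k + 1, hk⟩ * A ⟨m - 1, by omega⟩ j := by
  rw [mul_apply, Fintype.sum_eq_add ⟨k, by omega⟩ ⟨m - 1, by omega⟩
    (Fin.ne_of_val_ne (by dsimp only; omega)) fun l hl => ?_, hC, hC]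
  · simp [show k ≠ m - 1 by omega]
  · rw [hC, if_neg fun h => hl.1 (Fin.ext (by simp at h ⊢; omega)),
      if_neg fun h => hl.2 (Fin.ext h), zero_mul]

lemma pow_apply_zero_of_lt (hC : C.IsCompanion c) (hm : 0 < m) {s : ℕ} (hs : s < m)
    (i : Fin m) : (C ^ s) i ⟨0, hm⟩ = if (i : ℕ) = s then 1 else 0 := by
  induction s generalizing i with
  | zero => simp [one_apply, Fin.ext_iff]
  | succ s ih =>
    obtain ⟨_ | k, hk⟩ := i
    · simp [pow_succ', hC.mul_apply_zero hm, ih (by omega), show m - 1 ≠ s by omega]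
    · simp [pow_succ', hC.mul_apply_succ hk, ih (by omega), show m - 1 ≠ s by omega]

lemma pow_self_apply_zero (hC : C.IsCompanion c) (hm : 0 < m) (i : Fin m) :
    (C ^ m) i ⟨0, hm⟩ = c i := by
  rw [show C ^ m = C * C ^ (m - 1) by rw [← pow_succ', Nat.sub_add_cancel hm]]
  obtain ⟨_ | k, hk⟩ := i
  · simp [hC.mul_apply_zero hm, hC.pow_apply_zero_of_lt hm (Nat.sub_lt hm one_pos)]
  · simp [hC.mul_apply_succ hk, hC.pow_apply_zero_of_lt hm (Nat.sub_lt hm one_pos),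
      show k ≠ m - 1 by omega]

end Semiring

theorem pow_apply_zero_eq_hookSchur {R : Type*} [CommRing R] {m : ℕ}
    {C : Matrix (Fin m) (Fin m) R} {x : Fin m → R}
    (hC : C.IsCompanion fun i => (-1) ^ (m - 1 - i) * esymmF R m x (m - i))
    {t : ℕ} (ht : m ≤ t) {k : ℕ} (hk : k < m) :
    (C ^ t) ⟨k, hk⟩ ⟨0, Nat.zero_lt_of_lt hk⟩ =
      (-1) ^ (m - 1 - k) * hookSchur R m (t + 1 - m) (m - 1 - k) x := by
  have hm : 0 < m := Nat.zero_lt_of_lt hk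
  induction t, ht using Nat.le_induction generalizing k with
  | base =>
    rw [hC.pow_self_apply_zero hm, Nat.add_sub_cancel_left, hookSchur_one_left,
      show m - 1 - k + 1 = m - k by omega]
  | succ t ht ih =>
    obtain ⟨a, ha⟩ : ∃ a, t + 1 - m = a + 1 := ⟨t - m, by omega⟩
    have hlast : (C ^ t) ⟨m - 1, by omega⟩ ⟨0, hm⟩ = hsymmF R m x (a + 1) := by
      rw [ih (by omega), Nat.sub_self, pow_zero, one_mul, ha, hookSchur_zero_right]
    rw [pow_succ', show t + 1 + 1 - m = a + 2 by omega]
    rcases k with _ | k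
    -- row `0` has no subdiagonal entry, matching the vanishing of `s_{(a+1,1^m)}`
    · have hpieri := hsymmF_mul_esymmF x a (m - 1)
      rw [Nat.sub_add_cancel hm, hookSchur_eq_zero_of_le x a.succ_pos le_rfl, zero_add] at hpieri
      rw [hC.mul_apply_zero hm, hlast]
      simp only [Nat.sub_zero]
      linear_combination (-1) ^ (m - 1) * hpieri
    · obtain ⟨b, hb⟩ : ∃ b, m - 1 - k = b + 1 := ⟨m - 2 - k, by omega⟩
      rw [hC.mul_apply_succ hk, hlast, ih (by omega), ha, hb, show m - 1 - (k + 1) = b by omega,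
        show m - (k + 1) = b + 1 by omega]
      linear_combination (-1) ^ b * hsymmF_mul_esymmF x a b

end IsCompanion

end Matrix

/-- The paper's entry `C^t(k+1,1)` is `(C ^ t) ⟨k, hk⟩ ⟨0, _⟩` here. -/
theorem companion_pow_entry_bound (m : ℕ) (x : Fin m → ℂ)
    (β : ℝ) (hx : ∀ j, ‖x j‖ ≤ β)
    (C : Matrix (Fin m) (Fin m) ℂ)
    (hC : ∀ i j : Fin m, C i j =
      if (i : ℕ) = (j : ℕ) + 1 then 1
      else if (j : ℕ) = m - 1 then
        (-1 : ℂ) ^ (m - 1 - (i : ℕ)) * esymmF ℂ m x (m - (i : ℕ))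
      else 0)
    (t : ℕ) (ht : m ≤ t) (k : ℕ) (hk : k < m) :
    ‖(C ^ t) ⟨k, hk⟩ ⟨0, by omega⟩‖
        ≤ hookSchur ℝ m (t + 1 - m) (m - 1 - k) (fun _ => β) ∧
    hookSchur ℝ m (t + 1 - m) (m - 1 - k) (fun _ => β)
        = (Nat.card (HookSSYT m (t + 1 - m) (m - 1 - k)) : ℝ) * β ^ (t - k) := by
  refine ⟨?_, by rw [hookSchur_const, show t + 1 - m + (m - 1 - k) = t - k by omega]⟩
  rw [Matrix.IsCompanion.pow_apply_zero_eq_hookSchur hC ht hk, norm_mul, norm_pow, norm_neg,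
    norm_one, one_pow, one_mul]
  exact norm_hookSchur_le hx _ _
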